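/- arXiv:2007.13664 — 5 statements merged into one kernel-verified Lean document; each statement's English description precedes it below -/
import Mathlib

section
/- Let S ⊂ ℝ^N be a simplex with vertex e_v, let 0 < μ ≤ 1, and let ℓ be affine on the corner S_v^μ = conv({e_v} ∪ {(1−μ)e_v + μe_w : w ≠ v}). Then for any matrix A ∈ ℝ^{M×N} and y ∈ ℝ^M, the minimizer over z ∈ S of the one-sided directional derivative ∂_{z−e_v}[ℓ(x) + ½‖Ax−y‖²] at x = e_v, minus e_v, equals e_w − e_v, where e_w minimizes over vertices e_u of S the quantity ℓ((1−μ)e_v + μe_u) + μ(Ae_v − y)ᵀAe_u. -/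
/-!
Since `ℓ` is affine on the corner `S_v^μ`, the difference quotient of `ℓ` at `e_v` in the
direction `z - e_v` is constant for `0 < h ≤ μ`. Hence the directional derivative is
`g z = (ℓ((1-μ)e_v + μz) - ℓ(e_v))/μ + (Ae_v - y)ᵀA(z - e_v)`, an affine function of `z` on the
simplex whose value at a vertex `e_u` is the minimized quantity, shifted by a constant and divided
by `μ`. A concave function on a convex hull is minimized at a generator; if the minimizing vertex
`e_w` is strict, every other point of the simplex lies on a segment from `e_w` to a point where
the function is larger than at `e_w`, so the minimizer is unique.
-/

open Set Filter Topology Matrix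

section

variable {E : Type*} [AddCommGroup E] [Module ℝ E]

theorem ConcaveOn.le_of_mem_convexHull_range {ι : Type*} {e : ι → E} {φ : E → ℝ}
    (hφ : ConcaveOn ℝ (convexHull ℝ (range e)) φ) {w : ι} (hw : ∀ u, φ (e w) ≤ φ (e u))
    {z : E} (hz : z ∈ convexHull ℝ (range e)) : φ (e w) ≤ φ z := by
  obtain ⟨_, ⟨u, rfl⟩, hu⟩ := hφ.exists_le_of_mem_convexHull (subset_convexHull ℝ _) hz
  exact (hw u).trans hu

theorem ConcaveOn.eq_of_mem_convexHull_range {ι : Type*} {e : ι → E} {φ : E → ℝ}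
    (hφ : ConcaveOn ℝ (convexHull ℝ (range e)) φ) {w : ι} (hw : ∀ u ≠ w, φ (e w) < φ (e u))
    {z : E} (hz : z ∈ convexHull ℝ (range e)) (hzw : φ z ≤ φ (e w)) : z = e w := by
  set T := e '' {u | u ≠ w}
  have hrange : range e = insert (e w) T := by
    ext p
    simp only [mem_range, mem_insert_iff, T, mem_image, mem_ofPred_eq]
    grind
  rcases T.eq_empty_or_nonempty with hT | hT
  · rwa [hrange, hT, insert_empty_eq, convexHull_singleton] at hz
  rw [hrange, convexHull_insert hT, mem_convexJoin] at hz
  obtain ⟨_, rfl, t, ht, hzt⟩ := hz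
  have hTsub : convexHull ℝ T ⊆ convexHull ℝ (range e) :=
    convexHull_mono (hrange ▸ subset_insert _ _)
  have hwt : φ (e w) < φ t := by
    obtain ⟨_, ⟨u, hu, rfl⟩, hut⟩ :=
      (hφ.subset hTsub (convex_convexHull ℝ _)).exists_le_of_mem_convexHull
        (subset_convexHull ℝ _) ht
    exact (hw u hu).trans_le hut
  rw [← insert_endpoints_openSegment] at hzt
  rcases hzt with rfl | rfl | hzt
  · rfl
  · exact absurd hzw hwt.not_ge
  · have hwz := hφ.lt_right_of_left_lt (hTsub ht) (subset_convexHull ℝ _ ⟨w, rfl⟩)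
      (by rwa [openSegment_symm]) (hzw.trans_lt hwt)
    exact absurd hzw hwz.not_ge

theorem tendsto_slope_of_affine_on_segment {ℓ : E → ℝ} {x z : E} {μ : ℝ} (hμ : 0 < μ)
    (haff : ∀ l ∈ Icc (0 : ℝ) 1, ℓ ((1 - l) • x + l • ((1 - μ) • x + μ • z)) =
      (1 - l) * ℓ x + l * ℓ ((1 - μ) • x + μ • z)) :
    Tendsto (fun h => (ℓ (x + h • (z - x)) - ℓ x) / h) (𝓝[>] 0)
      (𝓝 ((ℓ ((1 - μ) • x + μ • z) - ℓ x) / μ)) := by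
  refine tendsto_const_nhds.congr' ?_
  filter_upwards [Ioc_mem_nhdsGT hμ] with h ⟨hh0, hhμ⟩
  have hpt : x + h • (z - x) = (1 - h / μ) • x + (h / μ) • ((1 - μ) • x + μ • z) := by
    match_scalars
    · field_simp; ring
    · field_simp
  rw [hpt, haff _ ⟨by positivity, (div_le_one hμ).mpr hhμ⟩]
  field_simp
  ring

theorem concaveOn_of_forall_combo_eq {s : Set E} (hs : Convex ℝ s) {ℓ : E → ℝ}
    (haff : ∀ x ∈ s, ∀ y ∈ s, ∀ l ∈ Icc (0 : ℝ) 1,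
      ℓ ((1 - l) • x + l • y) = (1 - l) * ℓ x + l * ℓ y) :
    ConcaveOn ℝ s ℓ := by
  refine ⟨hs, fun x hx y hy a b _ hb hab => ?_⟩
  obtain rfl : a = 1 - b := by linarith
  exact (haff x hx y hy b ⟨hb, by linarith⟩).ge

/-- The vertices of the corner `S_v^μ` of the simplex spanned by `e`. -/
def cornerVertices {V : Type*} (e : V → E) (v : V) (μ : ℝ) : Set E :=
  {e v} ∪ {p | ∃ w, w ≠ v ∧ p = (1 - μ) • e v + μ • e w}

theorem combo_mem_convexHull_cornerVertices {V : Type*} {e : V → E} (v : V) (μ : ℝ) {z : E}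
    (hz : z ∈ convexHull ℝ (range e)) :
    (1 - μ) • e v + μ • z ∈ convexHull ℝ (cornerVertices e v μ) := by
  have himage : AffineMap.homothety (e v) μ '' range e ⊆ cornerVertices e v μ := by
    rintro _ ⟨_, ⟨u, rfl⟩, rfl⟩
    rw [AffineMap.homothety_eq_lineMap, AffineMap.lineMap_apply_module]
    by_cases hu : u = v
    · left; subst hu; module
    · exact Or.inr ⟨u, hu, rfl⟩
  have hmem := convexHull_mono himage
    (AffineMap.image_convexHull (AffineMap.homothety (e v) μ) _ ▸ mem_image_of_mem _ hz)
  rwa [AffineMap.homothety_eq_lineMap, AffineMap.lineMap_apply_module] at hmem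

end

section

variable {m n : Type*} [Fintype m] [Fintype n]

theorem hasDerivAt_half_sum_sq {ι : Type*} [Fintype ι] (a b : ι → ℝ) :
    HasDerivAt (fun t => (1 / 2) * ∑ i, (a i + t * b i) ^ 2) (∑ i, a i * b i) 0 := by
  refine ((HasDerivAt.fun_sum (u := Finset.univ) fun i _ =>
    (((hasDerivAt_id' (0:ℝ)).mul_const (b i)).const_add (a i)).fun_pow 2).const_mul
      (1 / 2 : ℝ)).congr_deriv ?_
  simp only [Finset.mul_sum]
  exact Finset.sum_congr rfl fun i _ => by ring

theorem tendsto_slope_half_sum_sq (A : Matrix m n ℝ) (y : m → ℝ) (x d : n → ℝ) :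
    Tendsto (fun h => ((1 / 2) * ∑ i, (A.mulVec (x + h • d) i - y i) ^ 2 -
        (1 / 2) * ∑ i, (A.mulVec x i - y i) ^ 2) / h) (𝓝[>] 0)
      (𝓝 (∑ i, (A.mulVec x i - y i) * A.mulVec d i)) := by
  refine ((hasDerivAt_half_sum_sq _ _).tendsto_slope_zero_right).congr fun h => ?_
  simp [Matrix.mulVec_add, Matrix.mulVec_smul, div_eq_inv_mul, add_sub_right_comm]

/-- The one-sided derivative of `ℓ + ½‖A · - y‖²` at `x` in direction `z - x`, when `ℓ` is affine
on the segment from `x` to `(1 - μ) • x + μ • z`. -/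
noncomputable def objectiveSlope (ℓ : (n → ℝ) → ℝ) (A : Matrix m n ℝ) (y : m → ℝ) (μ : ℝ)
    (x z : n → ℝ) : ℝ :=
  (ℓ ((1 - μ) • x + μ • z) - ℓ x) / μ + ∑ i, (A.mulVec x i - y i) * A.mulVec (z - x) i

theorem tendsto_slope_objectiveSlope {ℓ : (n → ℝ) → ℝ} {x z : n → ℝ} {μ : ℝ} (hμ : 0 < μ)
    (haff : ∀ l ∈ Icc (0 : ℝ) 1, ℓ ((1 - l) • x + l • ((1 - μ) • x + μ • z)) =
      (1 - l) * ℓ x + l * ℓ ((1 - μ) • x + μ • z))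
    (A : Matrix m n ℝ) (y : m → ℝ) :
    Tendsto (fun h => (ℓ (x + h • (z - x)) +
        (1 / 2) * ∑ i, (A.mulVec (x + h • (z - x)) i - y i) ^ 2 -
        (ℓ x + (1 / 2) * ∑ i, (A.mulVec x i - y i) ^ 2)) / h) (𝓝[>] 0)
      (𝓝 (objectiveSlope ℓ A y μ x z)) :=
  ((tendsto_slope_of_affine_on_segment hμ haff).add
    (tendsto_slope_half_sum_sq A y x (z - x))).congr fun h => by ring

theorem concaveOn_sum_mul_mulVec_sub {s : Set (n → ℝ)} (hs : Convex ℝ s) (A : Matrix m n ℝ)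
    (r : m → ℝ) (c : n → ℝ) :
    ConcaveOn ℝ s fun z => ∑ i, r i * A.mulVec (z - c) i := by
  refine ⟨hs, fun x _ y _ a b _ _ hab => le_of_eq ?_⟩
  have hcombo : a • x + b • y - c = a • (x - c) + b • (y - c) := by
    linear_combination (norm := module) hab • c
  simp only [hcombo, mulVec_add, mulVec_smul, Pi.add_apply, Pi.smul_apply, smul_eq_mul,
    Finset.mul_sum, ← Finset.sum_add_distrib]
  exact Finset.sum_congr rfl fun i _ => by ring

theorem concaveOn_objectiveSlope {ℓ : (n → ℝ) → ℝ} {s t : Set (n → ℝ)} (hs : Convex ℝ s)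
    (hℓ : ConcaveOn ℝ t ℓ) {x : n → ℝ} {μ : ℝ} (hμ : 0 ≤ μ)
    (hst : ∀ z ∈ s, (1 - μ) • x + μ • z ∈ t) (A : Matrix m n ℝ) (y : m → ℝ) :
    ConcaveOn ℝ s (objectiveSlope ℓ A y μ x) := by
  have hℓT := (hℓ.comp_affineMap (AffineMap.homothety x μ)).subset (fun z hz => by
    rw [mem_preimage, AffineMap.homothety_eq_lineMap, AffineMap.lineMap_apply_module]
    exact hst z hz) hs
  refine (((hℓT.add_const (-ℓ x)).smul (inv_nonneg.2 hμ)).add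
    (concaveOn_sum_mul_mulVec_sub hs A (A.mulVec x - y) x)).congr fun z _ => ?_
  simp [objectiveSlope, AffineMap.homothety_eq_lineMap, AffineMap.lineMap_apply_module,
    div_eq_inv_mul, sub_eq_add_neg]

theorem objectiveSlope_lt_objectiveSlope_iff {ℓ : (n → ℝ) → ℝ} {A : Matrix m n ℝ} {y : m → ℝ}
    {μ : ℝ} (hμ : 0 < μ) {x p q : n → ℝ} :
    objectiveSlope ℓ A y μ x p < objectiveSlope ℓ A y μ x q ↔
      ℓ ((1 - μ) • x + μ • p) + μ * ∑ i, (A.mulVec x i - y i) * A.mulVec p i <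
      ℓ ((1 - μ) • x + μ • q) + μ * ∑ i, (A.mulVec x i - y i) * A.mulVec q i := by
  have key : ∀ z, objectiveSlope ℓ A y μ x z = (ℓ ((1 - μ) • x + μ • z) +
      μ * ∑ i, (A.mulVec x i - y i) * A.mulVec z i -
      (ℓ x + μ * ∑ i, (A.mulVec x i - y i) * A.mulVec x i)) / μ := fun z => by
    simp only [objectiveSlope, mulVec_sub, Pi.sub_apply, mul_sub, Finset.sum_sub_distrib]
    field_simp
    ring
  rw [key, key, div_lt_div_iff_of_pos_right hμ, sub_lt_sub_iff_right]

end

theorem stmt_2_general {N M : ℕ} {V : Type*}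
    (e : V → (Fin N → ℝ))
    (μ : ℝ) (hμ0 : 0 < μ) (v : V)
    (ℓ : (Fin N → ℝ) → ℝ)
    -- `ℓ` is affine on the corner `S_v^μ = conv({e v} ∪ {(1−μ)e_v + μe_w : w ≠ v})`
    (haff : ∀ x ∈ convexHull ℝ (({e v} : Set (Fin N → ℝ)) ∪
        {p | ∃ w, w ≠ v ∧ p = (1 - μ) • e v + μ • e w}),
      ∀ y ∈ convexHull ℝ (({e v} : Set (Fin N → ℝ)) ∪
        {p | ∃ w, w ≠ v ∧ p = (1 - μ) • e v + μ • e w}),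
      ∀ l ∈ Set.Icc (0:ℝ) 1,
      ℓ ((1 - l) • x + l • y) = (1 - l) * ℓ x + l * ℓ y)
    (A : Matrix (Fin M) (Fin N) ℝ) (y : Fin M → ℝ)
    -- the full objective `f(x) = ℓ(x) + ½‖Ax − y‖²`
    (f : (Fin N → ℝ) → ℝ)
    (hf : f = fun x => ℓ x + (1/2) * ∑ i, (A.mulVec x i - y i)^2)
    -- `g z` is the one-sided directional derivative of `f` at `e v` in direction `z − e v`
    (g : (Fin N → ℝ) → ℝ)
    (hg : ∀ z ∈ convexHull ℝ (Set.range e),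
      Filter.Tendsto (fun h : ℝ => (f (e v + h • (z - e v)) - f (e v)) / h)
        (nhdsWithin 0 (Set.Ioi 0)) (nhds (g z)))
    -- `e w` is the unique minimizer over vertices of `ℓ((1−μ)e_v+μe_u) + μ(Ae_v−y)ᵀAe_u`
    (w : V)
    (hw : ∀ u : V, u ≠ w →
      ℓ ((1 - μ) • e v + μ • e w) + μ * ∑ i, (A.mulVec (e v) i - y i) * A.mulVec (e w) i <
      ℓ ((1 - μ) • e v + μ • e u) + μ * ∑ i, (A.mulVec (e v) i - y i) * A.mulVec (e u) i) :
    (∀ z ∈ convexHull ℝ (Set.range e), g (e w) ≤ g z) ∧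
    (∀ z ∈ convexHull ℝ (Set.range e), g z = g (e w) → z = e w) := by
  set S := convexHull ℝ (range e)
  have hS : ∀ u, e u ∈ S := fun u => subset_convexHull ℝ _ ⟨u, rfl⟩
  have hev : e v ∈ convexHull ℝ (cornerVertices e v μ) := subset_convexHull ℝ _ (Or.inl rfl)
  have hgG : EqOn g (objectiveSlope ℓ A y μ (e v)) S := fun z hz =>
    tendsto_nhds_unique (hg z hz) (hf ▸ tendsto_slope_objectiveSlope hμ0
      (haff _ hev _ (combo_mem_convexHull_cornerVertices v μ hz)) A y)
  have hgconc : ConcaveOn ℝ S g :=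
    (concaveOn_objectiveSlope (convex_convexHull ℝ _)
      (concaveOn_of_forall_combo_eq (convex_convexHull ℝ _) haff) hμ0.le
      (fun z hz => combo_mem_convexHull_cornerVertices v μ hz) A y).congr hgG.symm
  have hgw : ∀ u ≠ w, g (e w) < g (e u) := fun u hu => by
    rw [hgG (hS u), hgG (hS w), objectiveSlope_lt_objectiveSlope_iff hμ0]
    exact hw u hu
  refine ⟨fun z hz => hgconc.le_of_mem_convexHull_range (fun u => ?_) hz,
    fun z hz hzw => hgconc.eq_of_mem_convexHull_range hgw hz hzw.le⟩
  rcases eq_or_ne u w with rfl | hu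
  exacts [le_rfl, (hgw u hu).le]

/-- Lemma (simplex derivative): the conditional-gradient direction at the vertex
`e v` for the objective `ℓ(x) + ½‖Ax−y‖²`, with `ℓ` affine on the corner
`S_v^μ`, is `e w − e v` where `e w` minimizes
`ℓ((1−μ)e_v + μe_u) + μ(Ae_v − y)ᵀAe_u` over vertices `e u`. -/
theorem stmt_2 {N M : ℕ} {V : Type*} [Fintype V] [DecidableEq V]
    (e : V → (Fin N → ℝ)) (hind : AffineIndependent ℝ e)
    (μ : ℝ) (hμ0 : 0 < μ) (hμ1 : μ ≤ 1) (v : V)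
    (ℓ : (Fin N → ℝ) → ℝ)
    -- `ℓ` is affine on the corner `S_v^μ = conv({e v} ∪ {(1−μ)e_v + μe_w : w ≠ v})`
    (haff : ∀ x ∈ convexHull ℝ (({e v} : Set (Fin N → ℝ)) ∪
        {p | ∃ w, w ≠ v ∧ p = (1 - μ) • e v + μ • e w}),
      ∀ y ∈ convexHull ℝ (({e v} : Set (Fin N → ℝ)) ∪
        {p | ∃ w, w ≠ v ∧ p = (1 - μ) • e v + μ • e w}),
      ∀ l ∈ Set.Icc (0:ℝ) 1,
      ℓ ((1 - l) • x + l • y) = (1 - l) * ℓ x + l * ℓ y)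
    (A : Matrix (Fin M) (Fin N) ℝ) (y : Fin M → ℝ)
    -- the full objective `f(x) = ℓ(x) + ½‖Ax − y‖²`
    (f : (Fin N → ℝ) → ℝ)
    (hf : f = fun x => ℓ x + (1/2) * ∑ i, (A.mulVec x i - y i)^2)
    -- `g z` is the one-sided directional derivative of `f` at `e v` in direction `z − e v`
    (g : (Fin N → ℝ) → ℝ)
    (hg : ∀ z ∈ convexHull ℝ (Set.range e),
      Filter.Tendsto (fun h : ℝ => (f (e v + h • (z - e v)) - f (e v)) / h)
        (nhdsWithin 0 (Set.Ioi 0)) (nhds (g z)))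
    -- `e w` is the unique minimizer over vertices of `ℓ((1−μ)e_v+μe_u) + μ(Ae_v−y)ᵀAe_u`
    (w : V)
    (hw : ∀ u : V, u ≠ w →
      ℓ ((1 - μ) • e v + μ • e w) + μ * ∑ i, (A.mulVec (e v) i - y i) * A.mulVec (e w) i <
      ℓ ((1 - μ) • e v + μ • e u) + μ * ∑ i, (A.mulVec (e v) i - y i) * A.mulVec (e u) i) :
    (∀ z ∈ convexHull ℝ (Set.range e), g (e w) ≤ g z) ∧
    (∀ z ∈ convexHull ℝ (Set.range e), g z = g (e w) → z = e w) :=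
  stmt_2_general e μ hμ0 v ℓ haff A y f hf g hg w hw
end

section
/- Let e_v, v ∈ V, be the standard orthonormal basis of ℝ^V with m = |V| ≥ 2, and for 0 < μ ≤ 1 define ℓ_v^μ(x) := max{0, (n_v^μ)ᵀx − d_μ} with n_v^μ := (1/(μm)) Σ_{w≠v} (e_v − e_w) and d_μ := ((1−μ)m − 1)/(μm). Then ℓ_v^μ(e_v) = 1, ℓ_v^μ((1−μ)e_v + μe_w) = 0 for all w ≠ v, and ℓ_v^μ(x) = 0 for all x in the standard simplex S outside the corner S_v^μ. -/
/-!
On the hyperplane `∑ x = 1` the affine function `n_v^μ ⬝ x - d_μ` equals `(x_v - (1 - μ)) / μ`.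
The corner `S_v^μ` is the image of `S` under the homothety with centre `e_v` and ratio `μ`, so
every point of `S` with `x_v ≥ 1 - μ` lies in the corner (its preimage under the homothety
is again in `S`), and outside the corner `x_v < 1 - μ`, where the ReLU cuts the function off.
-/

open Finset

section CornerLagrange

variable {V : Type*} [Fintype V] [DecidableEq V]

noncomputable def cornerNormal (μ : ℝ) (v : V) : V → ℝ :=
  (1 / (μ * Fintype.card V)) • ∑ w ∈ univ.erase v, (Pi.single v 1 - Pi.single w 1)

variable (V) in
noncomputable def cornerOffset (μ : ℝ) : ℝ :=
  ((1 - μ) * Fintype.card V - 1) / (μ * Fintype.card V)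

lemma sum_erase_single_sub_single_dotProduct (v : V) (x : V → ℝ) :
    (∑ w ∈ univ.erase v, (Pi.single v 1 - Pi.single w 1 : V → ℝ)) ⬝ᵥ x
      = Fintype.card V * x v - ∑ u, x u := by
  simp only [sum_dotProduct, sub_dotProduct, single_one_dotProduct]
  rw [sum_erase univ (f := fun w => x v - x w) (sub_self (x v)), sum_sub_distrib, sum_const,
    card_univ, nsmul_eq_mul]

lemma cornerNormal_dotProduct_sub_cornerOffset {μ : ℝ} (hμ : μ ≠ 0) (v : V) {x : V → ℝ}
    (hx : ∑ u, x u = 1) :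
    cornerNormal μ v ⬝ᵥ x - cornerOffset V μ = (x v - (1 - μ)) / μ := by
  have hV : (Fintype.card V : ℝ) ≠ 0 := Nat.cast_ne_zero.2 (Fintype.card_pos_iff.2 ⟨v⟩).ne'
  rw [cornerNormal, cornerOffset, smul_dotProduct, sum_erase_single_sub_single_dotProduct, hx,
    smul_eq_mul]
  field_simp
  ring

omit [Fintype V] in
lemma homothety_image_range_single_subset (v : V) (μ : ℝ) :
    AffineMap.homothety (Pi.single v 1 : V → ℝ) μ '' Set.range (Pi.single · 1) ⊆
      {Pi.single v 1} ∪
        {p | ∃ w, w ≠ v ∧ p = (1 - μ) • (Pi.single v 1 : V → ℝ) + μ • Pi.single w 1} := by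
  rintro _ ⟨_, ⟨w, rfl⟩, rfl⟩
  obtain rfl | hw := eq_or_ne w v
  · exact Or.inl (AffineMap.homothety_apply_same _ _)
  · exact Or.inr ⟨w, hw, by rw [AffineMap.homothety_eq_lineMap, AffineMap.lineMap_apply_module]⟩

lemma homothety_inv_mem_stdSimplex {μ : ℝ} (hμ : 0 < μ) (v : V) {x : V → ℝ}
    (hx : x ∈ stdSimplex ℝ V) (hxv : 1 - μ ≤ x v) :
    AffineMap.homothety (Pi.single v 1 : V → ℝ) μ⁻¹ x ∈ stdSimplex ℝ V := by
  refine ⟨fun u => ?_, ?_⟩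
  · simp only [AffineMap.homothety_apply, vsub_eq_sub, vadd_eq_add, Pi.add_apply, Pi.smul_apply,
      Pi.sub_apply, smul_eq_mul]
    obtain rfl | huv := eq_or_ne u v
    · rw [Pi.single_eq_same, show μ⁻¹ * (x u - 1) + 1 = μ⁻¹ * (x u - (1 - μ)) by
        field_simp; ring]
      exact mul_nonneg (inv_nonneg.2 hμ.le) (sub_nonneg.2 hxv)
    · rw [Pi.single_eq_of_ne huv, sub_zero, add_zero]
      exact mul_nonneg (inv_nonneg.2 hμ.le) (hx.1 u)
  · simp [AffineMap.homothety_apply, sum_add_distrib, ← mul_sum, sum_sub_distrib, hx.2]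

lemma mem_homothety_image_stdSimplex {μ : ℝ} (hμ : 0 < μ) (v : V) {x : V → ℝ}
    (hx : x ∈ stdSimplex ℝ V) (hxv : 1 - μ ≤ x v) :
    x ∈ AffineMap.homothety (Pi.single v 1 : V → ℝ) μ '' stdSimplex ℝ V :=
  ⟨_, homothety_inv_mem_stdSimplex hμ v hx hxv, by
    rw [← AffineMap.homothety_mul_apply, mul_inv_cancel₀ hμ.ne', AffineMap.homothety_one,
      AffineMap.id_apply]⟩

lemma mem_convexHull_corner {μ : ℝ} (hμ : 0 < μ) (v : V) {x : V → ℝ}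
    (hx : x ∈ stdSimplex ℝ V) (hxv : 1 - μ ≤ x v) :
    x ∈ convexHull ℝ ({Pi.single v 1} ∪
      {p | ∃ w, w ≠ v ∧ p = (1 - μ) • (Pi.single v 1 : V → ℝ) + μ • Pi.single w 1}) := by
  refine convexHull_mono (homothety_image_range_single_subset v μ) ?_
  rw [← AffineMap.image_convexHull, convexHull_rangle_single_eq_stdSimplex]
  exact mem_homothety_image_stdSimplex hμ v hx hxv

end CornerLagrange

theorem stmt_4_general {V : Type*} [Fintype V] [DecidableEq V]
    (μ : ℝ) (hμ0 : 0 < μ) (v : V) :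
    let m : ℝ := Fintype.card V
    let e : V → (V → ℝ) := fun u => Pi.single u 1
    let n : V → ℝ := (1 / (μ * m)) • ∑ w ∈ Finset.univ.erase v, (e v - e w)
    let d : ℝ := ((1 - μ) * m - 1) / (μ * m)
    let ℓ : (V → ℝ) → ℝ := fun x => max 0 (∑ u, n u * x u - d)
    ℓ (e v) = 1 ∧
    (∀ w : V, w ≠ v → ℓ ((1 - μ) • e v + μ • e w) = 0) ∧
    (∀ x ∈ convexHull ℝ (Set.range e),
      x ∉ convexHull ℝ (({e v} : Set (V → ℝ)) ∪
        {p | ∃ w, w ≠ v ∧ p = (1 - μ) • e v + μ • e w}) → ℓ x = 0) := by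
  intro m e n d ℓ
  have hℓ : ∀ x, ∑ u, x u = 1 → ℓ x = max 0 ((x v - (1 - μ)) / μ) := fun x hx =>
    congrArg (max 0) (cornerNormal_dotProduct_sub_cornerOffset hμ0.ne' v hx)
  refine ⟨?_, fun w hw => ?_, fun x hx hcorner => ?_⟩
  · rw [hℓ _ (single_mem_stdSimplex ℝ v).2]
    simp [hμ0.ne']
  · have hsum : ∑ u, ((1 - μ) • e v + μ • e w) u = 1 := by
      simp [e, sum_add_distrib, ← mul_sum]
    rw [hℓ _ hsum]
    simp [e, hw.symm]
  · rw [convexHull_rangle_single_eq_stdSimplex] at hx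
    rw [hℓ x hx.2, max_eq_left_iff, div_nonpos_iff]
    refine Or.inr ⟨sub_nonpos.2 (not_lt.1 fun hxv => hcorner ?_), hμ0.le⟩
    exact mem_convexHull_corner hμ0 v hx hxv.le

/-- The corner Lagrange function `ℓ_v^μ(x) = max{0, (n_v^μ)ᵀx − d_μ}` satisfies
`ℓ_v^μ(e_v) = 1`, vanishes at the corner vertices `(1−μ)e_v + μe_w`, and vanishes
on the standard simplex outside the corner `S_v^μ`. -/
theorem stmt_4 {V : Type*} [Fintype V] [DecidableEq V]
    (hm : 2 ≤ Fintype.card V)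
    (μ : ℝ) (hμ0 : 0 < μ) (hμ1 : μ ≤ 1) (v : V) :
    let m : ℝ := Fintype.card V
    let e : V → (V → ℝ) := fun u => Pi.single u 1
    let n : V → ℝ := (1 / (μ * m)) • ∑ w ∈ Finset.univ.erase v, (e v - e w)
    let d : ℝ := ((1 - μ) * m - 1) / (μ * m)
    let ℓ : (V → ℝ) → ℝ := fun x => max 0 (∑ u, n u * x u - d)
    ℓ (e v) = 1 ∧
    (∀ w : V, w ≠ v → ℓ ((1 - μ) • e v + μ • e w) = 0) ∧
    (∀ x ∈ convexHull ℝ (Set.range e),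
      x ∉ convexHull ℝ (({e v} : Set (V → ℝ)) ∪
        {p | ∃ w, w ≠ v ∧ p = (1 - μ) • e v + μ • e w}) → ℓ x = 0) :=
  stmt_4_general μ hμ0 v
end

section
/- Fix v ≠ w in V and 0 < μ ≤ 1. The m − 1 points (1−μ)e_v + μe_w and ½(e_v + e_u) for u ∉ {v,w} are affinely independent (in general position), hence lie on a unique hyperplane {x : n̄ᵀx + d̄ = 0} in the affine hull of the standard simplex; moreover e_v does not lie on this hyperplane, i.e. n̄ᵀe_v + d̄ ≠ 0. -/
/-- The `m − 1` points `(1−μ)e_v + μe_w` and `½(e_v + e_u)`, `u ∉ {v,w}`, are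
affinely independent, and `e_v` does not lie in their affine span (the hyperplane
through them). -/
theorem stmt_9 {V : Type*} [Fintype V] [DecidableEq V]
    (hm : 3 ≤ Fintype.card V) (v w : V) (hvw : v ≠ w)
    (μ : ℝ) (hμ0 : 0 < μ) (hμ1 : μ ≤ 1) :
    let e : V → (V → ℝ) := fun u => Pi.single u 1
    let p : Option {u : V // u ≠ v ∧ u ≠ w} → (V → ℝ) :=
      fun o => o.elim ((1 - μ) • e v + μ • e w)
        (fun u => (1/2 : ℝ) • (e v + e u.1))
    AffineIndependent ℝ p ∧ e v ∉ affineSpan ℝ (Set.range p) := by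
  intro e p
  constructor
  · rw [affineIndependent_iff_linearIndependent_vsub ℝ p none, linearIndependent_iff']
    intro s g hsum i hi
    obtain ⟨o, ho⟩ := i
    obtain ⟨u, rfl⟩ := Option.ne_none_iff_exists.mp ho
    have h := congrFun hsum u.1
    simp only [Finset.sum_apply, Pi.smul_apply, vsub_eq_sub, Pi.sub_apply,
      smul_eq_mul, Pi.zero_apply] at h
    rw [Finset.sum_eq_single_of_mem ⟨some u, ho⟩ hi] at h
    · simp only [p, e, Option.elim, Pi.add_apply, Pi.smul_apply, smul_eq_mul,
        Pi.single_eq_of_ne u.2.1, Pi.single_eq_of_ne u.2.2, Pi.single_eq_same] at h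
      linarith
    · intro j hj hne
      obtain ⟨oj, hoj⟩ := j
      obtain ⟨z, rfl⟩ := Option.ne_none_iff_exists.mp hoj
      have hz : u.1 ≠ z.1 := by
        intro hzu
        have hzu' : z = u := Subtype.ext hzu.symm
        subst hzu'
        exact hne rfl
      simp only [p, e, Option.elim, Pi.add_apply, Pi.smul_apply, smul_eq_mul,
        Pi.single_eq_of_ne u.2.1, Pi.single_eq_of_ne u.2.2, Pi.single_eq_of_ne hz]
      ring
  · intro hmem
    obtain ⟨wt, hw1, hwe⟩ := eq_affineCombination_of_mem_affineSpan_of_fintype hmem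
    rw [Finset.affineCombination_eq_linear_combination _ _ _ hw1] at hwe
    have hw := congrFun hwe w
    have hv := congrFun hwe v
    simp only [p, e, Finset.sum_apply, Pi.smul_apply, smul_eq_mul] at hw hv
    rw [Fintype.sum_option] at hw hv
    simp only [Option.elim, Pi.add_apply, Pi.smul_apply, smul_eq_mul,
      Pi.single_eq_same, Pi.single_eq_of_ne hvw, Pi.single_eq_of_ne hvw.symm] at hw hv
    have hsw : ∀ x : {u : V // u ≠ v ∧ u ≠ w}, (Pi.single (x.1) (1:ℝ) : V → ℝ) w = 0 :=
      fun x => Pi.single_eq_of_ne (Ne.symm x.2.2) 1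
    have hsv : ∀ x : {u : V // u ≠ v ∧ u ≠ w}, (Pi.single (x.1) (1:ℝ) : V → ℝ) v = 0 :=
      fun x => Pi.single_eq_of_ne (Ne.symm x.2.1) 1
    simp only [hsw, hsv, mul_zero, add_zero, zero_add, mul_one, zero_mul,
      Finset.sum_const_zero] at hw hv
    rw [Fintype.sum_option] at hw1
    rw [← Finset.sum_mul] at hv
    have hnone : wt none = 0 := by
      rcases mul_eq_zero.mp hw.symm with h | h
      · exact h
      · exact absurd h (ne_of_gt hμ0)
    rw [hnone] at hw1 hv
    rw [zero_add] at hw1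
    rw [hw1] at hv
    norm_num at hv
end

section
/- Let S = conv{e_v : v ∈ V} be the standard simplex and ℓ: S → ℝ satisfy: ℓ(e_v) = ω_v, ℓ(½(e_v+e_w)) = ω_{vw}, ℓ is affine on each corner S_v = S_v^{1/2}, and the weights satisfy ω_v > ω_{vw} for edges (v,w) ∈ E, ω_{uv} > ω_{vw} for consecutive edges, and ω_{vw} = B > all legitimate weights for non-edges. Let v ∈ V be a non-halting vertex with unique successor w along E. Then the conditional-gradient direction d = argmin_{y∈S} ∂_{y−e_v}ℓ(e_v) − e_v equals e_w − e_v, so one conditional gradient step with unit learning rate starting at e_v lands at e_w. -/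
/-!
Near the vertex `e v`, the point `(1 - h) • e v + h • z` lies on the segment from `e v` to
`½ (e v + z) = ∑ u, z u • ½ (e v + e u)`, a convex combination of vertices of the corner `S_v`.
Since `ℓ` is affine on `S_v`, the slope is constant for small `h`, and the directional derivative
is the linear function `g z = 2 (∑ u, z u * ℓ (½ (e v + e u)) - ω v)` of `z`. The weight
inequalities make `ℓ (½ (e v + e w))` the strictly smallest of its coefficients, so on the simplex
`g` is minimized exactly at the vertex `e w`.
-/

open Finset Filter Topology

def AffineOn {E : Type*} [AddCommGroup E] [Module ℝ E] (C : Set E) (f : E → ℝ) : Prop :=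
  ∀ x ∈ C, ∀ y ∈ C, ∀ l ∈ Set.Icc (0 : ℝ) 1, f ((1 - l) • x + l • y) = (1 - l) * f x + l * f y

namespace AffineOn

variable {E : Type*} [AddCommGroup E] [Module ℝ E] {C : Set E} {f : E → ℝ}

lemma convexOn (hC : Convex ℝ C) (hf : AffineOn C f) : ConvexOn ℝ C f := by
  refine ⟨hC, fun x hx y hy a b _ hb hab => le_of_eq ?_⟩
  obtain rfl : a = 1 - b := by linarith
  exact hf x hx y hy b ⟨hb, by linarith⟩

lemma concaveOn (hC : Convex ℝ C) (hf : AffineOn C f) : ConcaveOn ℝ C f := by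
  refine ⟨hC, fun x hx y hy a b _ hb hab => ge_of_eq ?_⟩
  obtain rfl : a = 1 - b := by linarith
  exact hf x hx y hy b ⟨hb, by linarith⟩

lemma map_sum {ι : Type*} (hC : Convex ℝ C) (hf : AffineOn C f) {t : Finset ι} {w : ι → ℝ}
    {p : ι → E} (h₀ : ∀ i ∈ t, 0 ≤ w i) (h₁ : ∑ i ∈ t, w i = 1) (hp : ∀ i ∈ t, p i ∈ C) :
    f (∑ i ∈ t, w i • p i) = ∑ i ∈ t, w i * f (p i) :=
  le_antisymm ((hf.convexOn hC).map_sum_le h₀ h₁ hp) ((hf.concaveOn hC).le_map_sum h₀ h₁ hp)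

lemma tendsto_slope (hf : AffineOn C f) {x z : E} {t : ℝ} (ht : 0 < t) (hx : x ∈ C)
    (hy : (1 - t) • x + t • z ∈ C) :
    Tendsto (fun h : ℝ => (f ((1 - h) • x + h • z) - f x) / h) (𝓝[>] 0)
      (𝓝 ((f ((1 - t) • x + t • z) - f x) / t)) := by
  refine tendsto_const_nhds.congr' ?_
  filter_upwards [Ioo_mem_nhdsGT ht] with h ⟨h0, hht⟩
  have hpt : (1 - h) • x + h • z = (1 - h / t) • x + (h / t) • ((1 - t) • x + t • z) := by
    match_scalars <;> field_simp
    ring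
  rw [hpt, hf x hx _ hy (h / t) ⟨by positivity, (div_le_one ht).2 hht.le⟩]
  field_simp
  ring

end AffineOn

def corner {V E : Type*} [AddCommGroup E] [Module ℝ E] (e : V → E) (u : V) : Set E :=
  convexHull ℝ ({e u} ∪ {p | ∃ t, t ≠ u ∧ p = (1 / 2 : ℝ) • (e u + e t)})

section Corner

variable {V E : Type*} [AddCommGroup E] [Module ℝ E]

lemma self_mem_corner (e : V → E) (u : V) : e u ∈ corner e u :=
  subset_convexHull ℝ _ (Or.inl rfl)

lemma midpoint_mem_corner (e : V → E) (u t : V) : (1 / 2 : ℝ) • (e u + e t) ∈ corner e u := by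
  rcases eq_or_ne t u with rfl | htu
  · convert self_mem_corner e t using 1
    module
  · exact subset_convexHull ℝ _ (Or.inr ⟨t, htu, rfl⟩)

end Corner

section Simplex

variable {V : Type*} [Fintype V]

lemma smul_add_eq_sum_smul_smul_add_single [DecidableEq V] (c : ℝ) (a : V → ℝ) {z : V → ℝ}
    (hz : ∑ u, z u = 1) : c • (a + z) = ∑ u, z u • c • (a + Pi.single u 1) := by
  simp only [smul_add, Finset.sum_add_distrib, smul_comm (z _) c, ← Finset.smul_sum,
    ← Finset.sum_smul, hz, one_smul, ← pi_eq_sum_univ' z]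

lemma tendsto_slope_of_affineOn_corner [DecidableEq V] {ℓ : (V → ℝ) → ℝ} {v : V}
    (hℓ : AffineOn (corner (fun u => Pi.single u 1) v) ℓ) {z : V → ℝ} (hz : z ∈ stdSimplex ℝ V) :
    Tendsto (fun h : ℝ => (ℓ ((1 - h) • Pi.single v 1 + h • z) - ℓ (Pi.single v 1)) / h) (𝓝[>] 0)
      (𝓝 (2 * (∑ u, z u * ℓ ((1 / 2 : ℝ) • (Pi.single v 1 + Pi.single u 1))
        - ℓ (Pi.single v 1)))) := by
  have hconv : Convex ℝ (corner (fun u => Pi.single u 1) v) := convex_convexHull ℝ _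
  have hmid : ∀ u ∈ univ, (1 / 2 : ℝ) • (Pi.single v 1 + Pi.single u 1) ∈
      corner (fun u => Pi.single u (1 : ℝ)) v := fun u _ => midpoint_mem_corner _ v u
  have hrep : (1 - 1 / 2 : ℝ) • Pi.single v 1 + (1 / 2 : ℝ) • z =
      ∑ u, z u • (1 / 2 : ℝ) • (Pi.single v 1 + Pi.single u 1) := by
    rw [← smul_add_eq_sum_smul_smul_add_single _ _ hz.2]
    module
  convert hℓ.tendsto_slope one_half_pos (self_mem_corner (fun u => Pi.single u (1 : ℝ)) v)
    (hrep ▸ hconv.sum_mem (fun u _ => hz.1 u) hz.2 hmid) using 2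
  rw [hrep, hℓ.map_sum hconv (fun u _ => hz.1 u) hz.2 hmid]
  ring

lemma le_sum_mul_of_mem_stdSimplex {z c : V → ℝ} {w : V} (hz : z ∈ stdSimplex ℝ V)
    (hc : ∀ u, c w ≤ c u) : c w ≤ ∑ u, z u * c u :=
  calc c w = ∑ u, z u * c w := by rw [← Finset.sum_mul, hz.2, one_mul]
    _ ≤ ∑ u, z u * c u := Finset.sum_le_sum fun u _ => mul_le_mul_of_nonneg_left (hc u) (hz.1 u)

lemma eq_single_of_sum_mul_eq [DecidableEq V] {z c : V → ℝ} {w : V} (hz : z ∈ stdSimplex ℝ V)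
    (hc : ∀ u ≠ w, c w < c u) (h : ∑ u, z u * c u = c w) : z = Pi.single w 1 := by
  have hle : ∀ u, c w ≤ c u := fun u => by
    rcases eq_or_ne u w with rfl | hu
    exacts [le_rfl, (hc u hu).le]
  have hsum : ∑ u, z u * (c u - c w) = 0 := by
    simp only [mul_sub, Finset.sum_sub_distrib, ← Finset.sum_mul, hz.2, h, one_mul, sub_self]
  have hzero : ∀ u ≠ w, z u = 0 := fun u hu => by
    have := (Finset.sum_eq_zero_iff_of_nonneg fun u _ =>
      mul_nonneg (hz.1 u) (sub_nonneg.2 (hle u))).1 hsum u (mem_univ u)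
    exact (mul_eq_zero.1 this).resolve_right (sub_ne_zero.2 (hc u hu).ne')
  have hzw : z w = 1 := by
    rw [← hz.2, Finset.sum_eq_single w (fun u _ hu => hzero u hu) (by simp)]
  ext u
  rcases eq_or_ne u w with rfl | hu
  · simp [hzw]
  · simp [hzero u hu, hu]

end Simplex

lemma edgeWeight_lt_of_successor {V : Type*} (E : V → V → Prop) (ωe : V → V → ℝ) (B : ℝ)
    (hsym : ∀ a b, ωe a b = ωe b a)
    (h2 : ∀ a b c, E a b → E b c → ωe a b > ωe b c)
    (h3 : ∀ a b, a ≠ b → ¬ E a b → ¬ E b a → ωe a b = B)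
    (hBe : ∀ a b, E a b → ωe a b < B)
    {v w : V} (hvw : E v w) (hdet : ∀ u, E v u → u = w) {u : V} (huv : u ≠ v) (huw : u ≠ w) :
    ωe v w < ωe v u := by
  by_cases hvu : E v u
  · exact absurd (hdet u hvu) huw
  by_cases huv' : E u v
  · rw [hsym v u]
    exact h2 u v w huv' hvw
  · rw [h3 v u huv.symm hvu huv']
    exact hBe v w hvw

theorem stmt_14_general {V : Type*} [Fintype V] [DecidableEq V]
    (e : V → (V → ℝ)) (he : e = fun u => Pi.single u 1)
    (E : V → V → Prop)
    (ω : V → ℝ) (ωe : V → V → ℝ) (B : ℝ)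
    (hsym : ∀ a b, ωe a b = ωe b a)
    (h1 : ∀ a b, E a b → ω a > ωe a b)
    (h2 : ∀ a b c, E a b → E b c → ωe a b > ωe b c)
    (h3 : ∀ a b, a ≠ b → ¬ E a b → ¬ E b a → ωe a b = B)
    (hBe : ∀ a b, E a b → ωe a b < B)
    (ℓ : (V → ℝ) → ℝ)
    (hval : ∀ u, ℓ (e u) = ω u)
    (hmid : ∀ a b, a ≠ b → ℓ ((1/2 : ℝ) • (e a + e b)) = ωe a b)
    -- `ℓ` is affine on each corner `S_u = conv({e u} ∪ {½(e u + e t) : t ≠ u})`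
    (haff : ∀ u : V,
      ∀ x ∈ convexHull ℝ (({e u} : Set (V → ℝ)) ∪
        {p | ∃ t, t ≠ u ∧ p = (1/2 : ℝ) • (e u + e t)}),
      ∀ y ∈ convexHull ℝ (({e u} : Set (V → ℝ)) ∪
        {p | ∃ t, t ≠ u ∧ p = (1/2 : ℝ) • (e u + e t)}),
      ∀ l ∈ Set.Icc (0:ℝ) 1,
      ℓ ((1 - l) • x + l • y) = (1 - l) * ℓ x + l * ℓ y)
    -- `v` is non-halting with unique successor `w`
    (v w : V) (hvw : E v w) (hne : v ≠ w) (hdet : ∀ u, E v u → u = w)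
    -- `g z` is the one-sided directional derivative of `ℓ` at `e v` in direction `z − e v`
    (g : (V → ℝ) → ℝ)
    (hg : ∀ z ∈ convexHull ℝ (Set.range e),
      Filter.Tendsto (fun h : ℝ => (ℓ ((1 - h) • e v + h • z) - ℓ (e v)) / h)
        (nhdsWithin 0 (Set.Ioi 0)) (nhds (g z))) :
    (∀ z ∈ convexHull ℝ (Set.range e), g (e w) ≤ g z) ∧
    (∀ z ∈ convexHull ℝ (Set.range e), g z = g (e w) → z = e w) ∧
    e v + (e w - e v) = e w := by
  subst he
  set c : V → ℝ := fun u => ℓ ((1 / 2 : ℝ) • (Pi.single v 1 + Pi.single u 1))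
  have hsimplex := convexHull_rangle_single_eq_stdSimplex ℝ V
  have hg_eq : ∀ z ∈ stdSimplex ℝ V, g z = 2 * (∑ u, z u * c u - ω v) := fun z hz => by
    rw [← hval v]
    exact tendsto_nhds_unique (hg z (hsimplex ▸ hz))
      (tendsto_slope_of_affineOn_corner (haff v) hz)
  have hc_v : c v = ω v := (congrArg ℓ (by module)).trans (hval v)
  have hc : ∀ u ≠ w, c w < c u := fun u huw => by
    rw [show c w = ωe v w from hmid v w hne]
    rcases eq_or_ne u v with rfl | huv
    · exact hc_v ▸ h1 u w hvw
    · rw [show c u = ωe v u from hmid v u huv.symm]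
      exact edgeWeight_lt_of_successor E ωe B hsym h2 h3 hBe hvw hdet huv huw
  have hg_w : g (Pi.single w 1) = 2 * (c w - ω v) := by
    simp [hg_eq _ (single_mem_stdSimplex ℝ w), Pi.single_apply]
  rw [hsimplex]
  refine ⟨fun z hz => ?_, fun z hz hgz => ?_, add_sub_cancel _ _⟩
  · rw [hg_eq z hz, hg_w]
    have hmin := le_sum_mul_of_mem_stdSimplex hz fun u => by
      rcases eq_or_ne u w with rfl | hu
      exacts [le_rfl, (hc u hu).le]
    linarith
  · rw [hg_eq z hz, hg_w] at hgz
    exact eq_single_of_sum_mul_eq hz hc (by linarith)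

/-- One conditional-gradient step at a non-halting vertex: for the
Turing-machine loss `ℓ` (vertex values `ω`, midpoint values `ωe`, affine on
each corner `S_u^{1/2}`), the direction minimizing the one-sided directional
derivative at `e_v` over the standard simplex is uniquely `e_w − e_v`, where
`w` is the unique successor of `v`; so one unit-step lands at `e_w`. -/
theorem stmt_14 {V : Type*} [Fintype V] [DecidableEq V]
    (e : V → (V → ℝ)) (he : e = fun u => Pi.single u 1)
    (E : V → V → Prop)
    (ω : V → ℝ) (ωe : V → V → ℝ) (B : ℝ)
    (hsym : ∀ a b, ωe a b = ωe b a)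
    (h1 : ∀ a b, E a b → ω a > ωe a b)
    (h2 : ∀ a b c, E a b → E b c → ωe a b > ωe b c)
    (h3 : ∀ a b, a ≠ b → ¬ E a b → ¬ E b a → ωe a b = B)
    (hBe : ∀ a b, E a b → ωe a b < B)
    (hBv : ∀ a, ω a < B)
    (ℓ : (V → ℝ) → ℝ)
    (hval : ∀ u, ℓ (e u) = ω u)
    (hmid : ∀ a b, a ≠ b → ℓ ((1/2 : ℝ) • (e a + e b)) = ωe a b)
    -- `ℓ` is affine on each corner `S_u = conv({e u} ∪ {½(e u + e t) : t ≠ u})`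
    (haff : ∀ u : V,
      ∀ x ∈ convexHull ℝ (({e u} : Set (V → ℝ)) ∪
        {p | ∃ t, t ≠ u ∧ p = (1/2 : ℝ) • (e u + e t)}),
      ∀ y ∈ convexHull ℝ (({e u} : Set (V → ℝ)) ∪
        {p | ∃ t, t ≠ u ∧ p = (1/2 : ℝ) • (e u + e t)}),
      ∀ l ∈ Set.Icc (0:ℝ) 1,
      ℓ ((1 - l) • x + l • y) = (1 - l) * ℓ x + l * ℓ y)
    -- `v` is non-halting with unique successor `w`
    (v w : V) (hvw : E v w) (hne : v ≠ w) (hdet : ∀ u, E v u → u = w)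
    -- `g z` is the one-sided directional derivative of `ℓ` at `e v` in direction `z − e v`
    (g : (V → ℝ) → ℝ)
    (hg : ∀ z ∈ convexHull ℝ (Set.range e),
      Filter.Tendsto (fun h : ℝ => (ℓ ((1 - h) • e v + h • z) - ℓ (e v)) / h)
        (nhdsWithin 0 (Set.Ioi 0)) (nhds (g z))) :
    (∀ z ∈ convexHull ℝ (Set.range e), g (e w) ≤ g z) ∧
    (∀ z ∈ convexHull ℝ (Set.range e), g z = g (e w) → z = e w) ∧
    e v + (e w - e v) = e w :=
  stmt_14_general e he E ω ωe B hsym h1 h2 h3 hBe ℓ hval hmid haff v w hvw hne hdet g hg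
end

section
/- Under the hypotheses of the no-extra-tape construction (Proposition 2 of the paper): ℓ satisfies the graph weight conditions, the interpolation conditions at vertices and edge midpoints, and is affine on each corner S_v; and the initial point is x₀ = e_{v₀} for the initial Turing-machine state v₀. Then the conditional gradient iterates with unit learning rate satisfy x_k = e_{v_k} for k ≤ K, where v₀,…,v_K are the consecutive states of the Turing machine execution with v_K a halting state. -/
open Finset Filter Topology

/-!
At a vertex `e_u` of the simplex, the segment from `e_u` towards any `z` in the simplex stays,
for step `h ≤ 1/2`, in the corner `S_u`, where it equals `(1 - 2h) e_u + 2h m` with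
`m = (e_u + z)/2 = ∑ₜ zₜ (e_u + e_t)/2`. Since `ℓ` is affine on `S_u`, the directional derivative
at `e_u` towards `z` is the linear function `2 (∑ₜ zₜ cₜ - ω_u)` of `z`, where `c_u = ω_u` and
`c_t = ω_{ut}` otherwise. The weight conditions make the successor `w` of `u` the unique
minimiser of `c`, so the only minimiser of the derivative over the simplex is `e_w`.
-/

def IsAffineOnSegments {E : Type*} [AddCommGroup E] [Module ℝ E] (C : Set E) (f : E → ℝ) :
    Prop :=
  ∀ x ∈ C, ∀ y ∈ C, ∀ l ∈ Set.Icc (0:ℝ) 1, f ((1 - l) • x + l • y) = (1 - l) * f x + l * f y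

lemma IsAffineOnSegments.map_sum_eq {E ι : Type*} [AddCommGroup E] [Module ℝ E]
    {C : Set E} {f : E → ℝ} (hf : IsAffineOnSegments C f) (hC : Convex ℝ C)
    {s : Finset ι} {w : ι → ℝ} {p : ι → E} (hw₀ : ∀ i ∈ s, 0 ≤ w i)
    (hw₁ : ∑ i ∈ s, w i = 1) (hp : ∀ i ∈ s, p i ∈ C) :
    f (∑ i ∈ s, w i • p i) = ∑ i ∈ s, w i * f (p i) := by
  have hseg : ∀ x ∈ C, ∀ y ∈ C, ∀ a b : ℝ, 0 ≤ a → 0 ≤ b → a + b = 1 →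
      f (a • x + b • y) = a • f x + b • f y := by
    intro x hx y hy a b _ hb hab
    obtain rfl : a = 1 - b := by linarith
    exact hf x hx y hy b ⟨hb, by linarith⟩
  have hconv : ConvexOn ℝ C f :=
    ⟨hC, fun x hx y hy a b ha hb hab => (hseg x hx y hy a b ha hb hab).le⟩
  have hconc : ConcaveOn ℝ C f :=
    ⟨hC, fun x hx y hy a b ha hb hab => (hseg x hx y hy a b ha hb hab).ge⟩
  simpa only [smul_eq_mul] using
    le_antisymm (hconv.map_sum_le hw₀ hw₁ hp) (hconc.le_map_sum hw₀ hw₁ hp)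

lemma eq_single_of_sum_mul_le {V : Type*} [Fintype V] [DecidableEq V] {y c : V → ℝ} {w : V}
    (hy : y ∈ stdSimplex ℝ V) (hc : ∀ t ≠ w, c w < c t) (hle : ∑ t, y t * c t ≤ c w) :
    y = Pi.single w 1 := by
  have hnonneg : ∀ t ∈ univ, 0 ≤ y t * (c t - c w) := fun t _ => by
    rcases eq_or_ne t w with rfl | htw
    · simp
    · exact mul_nonneg (hy.1 t) (sub_pos.2 (hc t htw)).le
  have hsum : ∑ t, y t * (c t - c w) = ∑ t, y t * c t - c w := by
    simp only [mul_sub, sum_sub_distrib, ← sum_mul, hy.2, one_mul]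
  have hzero : ∀ t ≠ w, y t = 0 := fun t htw =>
    (mul_eq_zero.1 ((sum_eq_zero_iff_of_nonneg hnonneg).1
      (le_antisymm (by linarith) (sum_nonneg hnonneg)) t (mem_univ t))).resolve_right
      (sub_pos.2 (hc t htw)).ne'
  have hyw : y w = 1 := by
    rw [← hy.2, ← add_sum_erase _ _ (mem_univ w),
      sum_eq_zero fun t ht => hzero t (ne_of_mem_erase ht), add_zero]
  ext t
  rcases eq_or_ne t w with rfl | htw
  · simp [hyw]
  · simp [hzero t htw, htw]

lemma weight_successor_lt {V : Type*} {E : V → V → Prop} {ω : V → ℝ} {ωe : V → V → ℝ} {B : ℝ}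
    (hsym : ∀ a b, ωe a b = ωe b a)
    (h1 : ∀ a b, E a b → ω a > ωe a b)
    (h2 : ∀ a b c, E a b → E b c → ωe a b > ωe b c)
    (h3 : ∀ a b, a ≠ b → ¬ E a b → ¬ E b a → ωe a b = B)
    (hBv : ∀ a, ω a < B)
    (hdet : ∀ a b c, E a b → E a c → b = c)
    {u w t : V} (huw : E u w) (htu : t ≠ u) (htw : t ≠ w) : ωe u w < ωe u t := by
  by_cases hEtu : E t u
  · rw [hsym u t]
    exact h2 t u w hEtu huw
  · have hEut : ¬ E u t := fun h => htw (hdet u t w h huw)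
    rw [h3 u t htu.symm hEut hEtu]
    linarith [h1 u w huw, hBv u]

lemma loss_half_smul_single_add_single_successor_lt {V : Type*} [DecidableEq V]
    {E : V → V → Prop} {ω : V → ℝ} {ωe : V → V → ℝ} {B : ℝ} {ℓ : (V → ℝ) → ℝ}
    (hsym : ∀ a b, ωe a b = ωe b a)
    (h1 : ∀ a b, E a b → ω a > ωe a b)
    (h2 : ∀ a b c, E a b → E b c → ωe a b > ωe b c)
    (h3 : ∀ a b, a ≠ b → ¬ E a b → ¬ E b a → ωe a b = B)
    (hBv : ∀ a, ω a < B)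
    (hdet : ∀ a b c, E a b → E a c → b = c)
    (hirr : ∀ a, ¬ E a a)
    (hval : ∀ u, ℓ (Pi.single u 1) = ω u)
    (hmid : ∀ a b, a ≠ b → ℓ ((1/2 : ℝ) • (Pi.single a 1 + Pi.single b 1)) = ωe a b)
    {u w t : V} (huw : E u w) (htw : t ≠ w) :
    ℓ ((1/2 : ℝ) • (Pi.single u 1 + Pi.single w 1)) <
      ℓ ((1/2 : ℝ) • (Pi.single u 1 + Pi.single t 1)) := by
  have hwu : w ≠ u := fun h => hirr u (h ▸ huw)
  rw [hmid u w hwu.symm]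
  by_cases htu : t = u
  · rw [htu, ← two_smul ℝ (Pi.single u 1 : V → ℝ), smul_smul]
    norm_num [hval]
    exact h1 u w huw
  · rw [hmid u t (Ne.symm htu)]
    exact weight_successor_lt hsym h1 h2 h3 hBv hdet huw htu htw

section Corner

variable {V : Type*} [DecidableEq V]

def simplexCorner (u : V) : Set (V → ℝ) :=
  convexHull ℝ ({Pi.single u 1} ∪
    {p | ∃ t, t ≠ u ∧ p = (1/2 : ℝ) • (Pi.single u 1 + Pi.single t 1)})

lemma half_smul_single_add_single_mem_simplexCorner (u t : V) :
    (1/2 : ℝ) • (Pi.single u 1 + Pi.single t 1 : V → ℝ) ∈ simplexCorner u := by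
  rcases eq_or_ne t u with rfl | htu
  · refine subset_convexHull ℝ _ (Or.inl ?_)
    rw [Set.mem_singleton_iff]
    module
  · exact subset_convexHull ℝ _ (Or.inr ⟨t, htu, rfl⟩)

variable [Fintype V]

lemma half_smul_single_add_eq_sum {z : V → ℝ} (hz : ∑ t, z t = 1) (u : V) :
    (1/2 : ℝ) • (Pi.single u 1 + z) =
      ∑ t, z t • (1/2 : ℝ) • (Pi.single u 1 + Pi.single t 1 : V → ℝ) := by
  ext i
  by_cases hi : i = u <;>
    simp [Finset.sum_apply, Pi.single_apply, sum_add_distrib, ← sum_mul, hz, hi] <;>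
    ring

lemma half_smul_single_add_mem_simplexCorner {z : V → ℝ}
    (hz : z ∈ stdSimplex ℝ V) (u : V) :
    (1/2 : ℝ) • (Pi.single u 1 + z) ∈ simplexCorner u := by
  rw [half_smul_single_add_eq_sum hz.2]
  exact (convex_convexHull ℝ _).sum_mem (fun t _ => hz.1 t) hz.2
    fun t _ => half_smul_single_add_single_mem_simplexCorner u t

variable {ℓ : (V → ℝ) → ℝ} {u : V} {z : V → ℝ}

lemma loss_half_smul_single_add
    (haff : IsAffineOnSegments (simplexCorner u) ℓ)
    (hz : z ∈ stdSimplex ℝ V) :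
    ℓ ((1/2 : ℝ) • (Pi.single u 1 + z)) =
      ∑ t, z t * ℓ ((1/2 : ℝ) • (Pi.single u 1 + Pi.single t 1)) := by
  rw [half_smul_single_add_eq_sum hz.2]
  exact haff.map_sum_eq (convex_convexHull ℝ _) (fun t _ => hz.1 t) hz.2
    fun t _ => half_smul_single_add_single_mem_simplexCorner u t

lemma loss_segment_from_single
    (haff : IsAffineOnSegments (simplexCorner u) ℓ)
    (hz : z ∈ stdSimplex ℝ V) {h : ℝ} (h₀ : 0 ≤ h) (h₁ : h ≤ 1/2) :
    ℓ ((1 - h) • Pi.single u 1 + h • z) =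
      (1 - 2 * h) * ℓ (Pi.single u 1) + 2 * h * ℓ ((1/2 : ℝ) • (Pi.single u 1 + z)) := by
  have hsplit : (1 - h) • Pi.single u 1 + h • z =
      (1 - 2 * h) • Pi.single u 1 + (2 * h) • (1/2 : ℝ) • (Pi.single u 1 + z) := by
    module
  rw [hsplit]
  exact haff _ (subset_convexHull ℝ _ (Or.inl rfl)) _
    (half_smul_single_add_mem_simplexCorner hz u) _ ⟨by linarith, by linarith⟩

lemma tendsto_slope_loss_segment_from_single
    (haff : IsAffineOnSegments (simplexCorner u) ℓ)
    (hz : z ∈ stdSimplex ℝ V) :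
    Tendsto (fun h : ℝ => (ℓ ((1 - h) • Pi.single u 1 + h • z) - ℓ (Pi.single u 1)) / h)
      (𝓝[>] 0) (𝓝 (2 * (ℓ ((1/2 : ℝ) • (Pi.single u 1 + z)) - ℓ (Pi.single u 1)))) := by
  refine tendsto_const_nhds.congr' ?_
  filter_upwards [Ioo_mem_nhdsGT (by norm_num : (0:ℝ) < 1/2)] with h ⟨h₀, h₁⟩
  rw [loss_segment_from_single haff hz h₀.le h₁.le]
  field_simp
  ring

end Corner

theorem stmt_15_general {V : Type*} [Fintype V] [DecidableEq V]
    (e : V → (V → ℝ)) (he : e = fun u => Pi.single u 1)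
    (E : V → V → Prop)
    (ω : V → ℝ) (ωe : V → V → ℝ) (B : ℝ)
    (hsym : ∀ a b, ωe a b = ωe b a)
    (h1 : ∀ a b, E a b → ω a > ωe a b)
    (h2 : ∀ a b c, E a b → E b c → ωe a b > ωe b c)
    (h3 : ∀ a b, a ≠ b → ¬ E a b → ¬ E b a → ωe a b = B)
    (hBv : ∀ a, ω a < B)
    -- the computation is deterministic and never stays in place
    (hdet : ∀ a b c, E a b → E a c → b = c)
    (hirr : ∀ a, ¬ E a a)
    (ℓ : (V → ℝ) → ℝ)
    (hval : ∀ u, ℓ (e u) = ω u)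
    (hmid : ∀ a b, a ≠ b → ℓ ((1/2 : ℝ) • (e a + e b)) = ωe a b)
    (haff : ∀ u : V,
      ∀ x ∈ convexHull ℝ (({e u} : Set (V → ℝ)) ∪
        {p | ∃ t, t ≠ u ∧ p = (1/2 : ℝ) • (e u + e t)}),
      ∀ y ∈ convexHull ℝ (({e u} : Set (V → ℝ)) ∪
        {p | ∃ t, t ≠ u ∧ p = (1/2 : ℝ) • (e u + e t)}),
      ∀ l ∈ Set.Icc (0:ℝ) 1,
      ℓ ((1 - l) • x + l • y) = (1 - l) * ℓ x + l * ℓ y)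
    -- the Turing machine execution `v₀, …, v_K`
    (v : ℕ → V) (K : ℕ) (hvE : ∀ k, k < K → E (v k) (v (k + 1)))
    -- the conditional gradient iterates with unit learning rate:
    -- `x_{k+1} = x_k + (argmin_{y ∈ S} ∂_{y − x_k} ℓ(x_k) − x_k)`
    (x : ℕ → (V → ℝ)) (hx0 : x 0 = e (v 0))
    (g : ℕ → (V → ℝ) → ℝ)
    (hg : ∀ k, ∀ z ∈ convexHull ℝ (Set.range e),
      Filter.Tendsto (fun h : ℝ => (ℓ ((1 - h) • x k + h • z) - ℓ (x k)) / h)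
        (nhdsWithin 0 (Set.Ioi 0)) (nhds (g k z)))
    (hupd : ∀ k, x (k + 1) ∈ convexHull ℝ (Set.range e) ∧
      ∀ z ∈ convexHull ℝ (Set.range e), g k (x (k + 1)) ≤ g k z) :
    ∀ k ≤ K, x k = e (v k) := by
  subst he
  beta_reduce at *
  rw [convexHull_rangle_single_eq_stdSimplex] at hg hupd
  intro k hk
  induction k with
  | zero => exact hx0
  | succ k ih =>
    set u := v k
    set w := v (k + 1)
    have huw : E u w := hvE k (by omega)
    have hxk : x k = Pi.single u 1 := ih (by omega)
    set c : V → ℝ := fun t => ℓ ((1/2 : ℝ) • (Pi.single u 1 + Pi.single t 1))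
    have hgc : ∀ z ∈ stdSimplex ℝ V, g k z = 2 * (∑ t, z t * c t - ℓ (Pi.single u 1)) := by
      intro z hz
      have hslope := hg k z hz
      rw [hxk] at hslope
      rw [← loss_half_smul_single_add (haff u) hz]
      exact tendsto_nhds_unique hslope (tendsto_slope_loss_segment_from_single (haff u) hz)
    have hcw : ∀ t ≠ w, c w < c t := fun t htw =>
      loss_half_smul_single_add_single_successor_lt hsym h1 h2 h3 hBv hdet hirr hval hmid huw htw
    obtain ⟨hmem, hmin⟩ := hupd k
    refine eq_single_of_sum_mul_le hmem hcw ?_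
    have hmin_w := hmin _ (single_mem_stdSimplex ℝ w)
    rw [hgc _ hmem, hgc _ (single_mem_stdSimplex ℝ w)] at hmin_w
    simp only [Pi.single_apply, ite_mul, one_mul, zero_mul, sum_ite_eq', mem_univ, if_true] at hmin_w
    linarith

/-- Tracing a Turing machine by conditional gradient descent (no extra tape
variable): with the loss `ℓ` satisfying the graph-weight conditions, the
interpolation conditions at vertices and edge midpoints, and affine on each
corner, the conditional gradient iterates with unit learning rate started at
`x₀ = e_{v₀}` satisfy `x_k = e_{v_k}` for `k ≤ K`, where `v₀, …, v_K` are the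
consecutive states of the Turing machine execution. -/
theorem stmt_15 {V : Type*} [Fintype V] [DecidableEq V]
    (e : V → (V → ℝ)) (he : e = fun u => Pi.single u 1)
    (E : V → V → Prop)
    (ω : V → ℝ) (ωe : V → V → ℝ) (B : ℝ)
    (hsym : ∀ a b, ωe a b = ωe b a)
    (h1 : ∀ a b, E a b → ω a > ωe a b)
    (h2 : ∀ a b c, E a b → E b c → ωe a b > ωe b c)
    (h3 : ∀ a b, a ≠ b → ¬ E a b → ¬ E b a → ωe a b = B)
    (hBe : ∀ a b, E a b → ωe a b < B)
    (hBv : ∀ a, ω a < B)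
    -- the computation is deterministic and never stays in place
    (hdet : ∀ a b c, E a b → E a c → b = c)
    (hirr : ∀ a, ¬ E a a)
    (ℓ : (V → ℝ) → ℝ)
    (hval : ∀ u, ℓ (e u) = ω u)
    (hmid : ∀ a b, a ≠ b → ℓ ((1/2 : ℝ) • (e a + e b)) = ωe a b)
    (haff : ∀ u : V,
      ∀ x ∈ convexHull ℝ (({e u} : Set (V → ℝ)) ∪
        {p | ∃ t, t ≠ u ∧ p = (1/2 : ℝ) • (e u + e t)}),
      ∀ y ∈ convexHull ℝ (({e u} : Set (V → ℝ)) ∪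
        {p | ∃ t, t ≠ u ∧ p = (1/2 : ℝ) • (e u + e t)}),
      ∀ l ∈ Set.Icc (0:ℝ) 1,
      ℓ ((1 - l) • x + l • y) = (1 - l) * ℓ x + l * ℓ y)
    -- the Turing machine execution `v₀, …, v_K`
    (v : ℕ → V) (K : ℕ) (hvE : ∀ k, k < K → E (v k) (v (k + 1)))
    -- the conditional gradient iterates with unit learning rate:
    -- `x_{k+1} = x_k + (argmin_{y ∈ S} ∂_{y − x_k} ℓ(x_k) − x_k)`
    (x : ℕ → (V → ℝ)) (hx0 : x 0 = e (v 0))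
    (g : ℕ → (V → ℝ) → ℝ)
    (hg : ∀ k, ∀ z ∈ convexHull ℝ (Set.range e),
      Filter.Tendsto (fun h : ℝ => (ℓ ((1 - h) • x k + h • z) - ℓ (x k)) / h)
        (nhdsWithin 0 (Set.Ioi 0)) (nhds (g k z)))
    (hupd : ∀ k, x (k + 1) ∈ convexHull ℝ (Set.range e) ∧
      ∀ z ∈ convexHull ℝ (Set.range e), g k (x (k + 1)) ≤ g k z) :
    ∀ k ≤ K, x k = e (v k) :=
  stmt_15_general e he E ω ωe B hsym h1 h2 h3 hBv hdet hirr ℓ hval hmid haff v K hvE x hx0 g hg hupd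
end
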